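/- arXiv:2107.10145 — 4 statements merged into one kernel-verified Lean document; each statement's English description precedes it below -/
import Mathlib

section
/- Let φ⁻¹ : [Re > 0] → 𝔻 be the inverse Cayley transform φ⁻¹(s) = (s−1)/(s+1). For all t, y ∈ ℝ, setting A_ε(t,y) = |φ⁻¹(ε + iyε + it) − φ⁻¹(it)| / (1 − |φ⁻¹(ε + iyε + it)|) for ε > 0, one has lim_{ε→0⁺} A_ε(t,y) = |1 + iy|. Consequently, for every α > |1 + iy| there exists ε₀ > 0 such that for all 0 < ε < ε₀ the point φ⁻¹(ε + iyε + it) lies in the Stolz region S(α, φ⁻¹(it)) = {z ∈ 𝔻 : |z − φ⁻¹(it)| ≤ α(1 − |z|)}. -/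
open Complex MeasureTheory Filter Topology Set
open scoped Classical

noncomputable section

/-- A frequency: a strictly increasing sequence of nonnegative reals tending to infinity. -/
def IsFrequency (lam : ℕ → ℝ) : Prop :=
  StrictMono lam ∧ (∀ n, 0 ≤ lam n) ∧ Tendsto lam atTop atTop

/-- The `(λ,k)`-Riesz mean `R_x^{λ,k}(s) = Σ_{λ_n < x} a_n e^{-λ_n s} (1 - λ_n/x)^k`. -/
def RieszMean (lam : ℕ → ℝ) (a : ℕ → ℂ) (k : ℝ) (x : ℝ) (s : ℂ) : ℂ :=
  ∑' n, if lam n < x then a n * Complex.exp (-(lam n : ℂ) * s) * (((1 - lam n / x) ^ k : ℝ) : ℂ)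
    else 0

/-- `f` possesses a `λ`-Riesz germ with coefficients `a`: on some nonempty open subset of the
right half-plane, `f` is the pointwise limit of the `(λ,m)`-Riesz means for some `m ≥ 0`. -/
def HasRieszGerm (lam : ℕ → ℝ) (a : ℕ → ℂ) (f : ℂ → ℂ) : Prop :=
  ∃ m : ℝ, 0 ≤ m ∧ ∃ U : Set ℂ, IsOpen U ∧ U.Nonempty ∧ U ⊆ {s : ℂ | 0 < s.re} ∧
    ∀ s ∈ U, Tendsto (fun x : ℝ => RieszMean lam a m x s) atTop (nhds (f s))

/-- Membership in `H^λ_{∞,ℓ}[Re > 0]` with coefficients `a`. -/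
def MemHlam (lam : ℕ → ℝ) (a : ℕ → ℂ) (l : ℝ) (f : ℂ → ℂ) : Prop :=
  DifferentiableOn ℂ f {s : ℂ | 0 < s.re} ∧
  (∃ C : ℝ, ∀ s : ℂ, 0 < s.re → ‖f s‖ ≤ C * (1 + ‖s‖) ^ l) ∧
  HasRieszGerm lam a f

/-- The horizontal limit function `f*(it) = lim_{ε→0⁺} f(ε + it)` (and `0` if no limit exists). -/
def horizLim (f : ℂ → ℂ) (t : ℝ) : ℂ :=
  if h : ∃ L : ℂ, Tendsto (fun e : ℝ => f ((e : ℂ) + (t : ℂ) * Complex.I))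
      (nhdsWithin 0 (Set.Ioi 0)) (nhds L)
  then h.choose else 0

/-- The Poisson kernel `P_u(t) = (1/π) u/(u² + t²)`. -/
def poisson (u t : ℝ) : ℝ := (1 / Real.pi) * u / (u ^ 2 + t ^ 2)

/-- The kernel `K_x^k(t) = (Γ(1+k) e / (2π)) · x / (1 + ixt)^{1+k}`. -/
def Kker (k : ℝ) (x t : ℝ) : ℂ :=
  ((Real.Gamma (1 + k) * Real.exp 1 / (2 * Real.pi) : ℝ) : ℂ) * (x : ℂ) /
    (1 + Complex.I * (x : ℂ) * (t : ℂ)) ^ ((1 + k : ℝ) : ℂ)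

/-- The kernel `R^{k,ℓ}(x,y) = ∫ P_{x⁻¹}(t-y) e^{itx} (1 + x⁻¹ + it)^ℓ K_x^k(t) dt`. -/
def Rker (k l : ℝ) (x y : ℝ) : ℂ :=
  ∫ t : ℝ, ((poisson x⁻¹ (t - y) : ℝ) : ℂ) * Complex.exp (Complex.I * (t : ℂ) * (x : ℂ)) *
    (1 + ((x⁻¹ : ℝ) : ℂ) + Complex.I * (t : ℂ)) ^ ((l : ℝ) : ℂ) * Kker k x t

/-- The inverse Cayley transform `φ⁻¹(s) = (s-1)/(s+1)` from the right half-plane to the disc. -/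
def cayleyInv (s : ℂ) : ℂ := (s - 1) / (s + 1)

/-
For `Re s > 0` and `w` on the imaginary axis, put `p = |s + 1|`, `q = |s - 1|`; then
`p² - q² = 4 Re s`, so `1 - |φ⁻¹(s)| = (p - q)/p = 4 Re s / (p (p + q))`, while
`φ⁻¹(s) - φ⁻¹(w) = 2 (s - w) / ((s + 1)(w + 1))`. Hence the Stolz ratio equals
`|s - w| (p + q) / (2 Re s |w + 1|)`. Along `s = w + ε v` this is `|v| (p + q) / (2 Re v |w + 1|)`,
a continuous function of `ε` whose value at `ε = 0` is `|v| / Re v`, because `|w - 1| = |w + 1|`.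
-/

namespace Complex

lemma norm_add_one_sq_sub_norm_sub_one_sq (s : ℂ) : ‖s + 1‖ ^ 2 - ‖s - 1‖ ^ 2 = 4 * s.re := by
  rw [Complex.sq_norm, Complex.sq_norm, normSq_apply, normSq_apply]
  simp only [add_re, sub_re, add_im, sub_im, one_re, one_im]
  ring

lemma norm_sub_one_eq_norm_add_one_of_re_eq_zero {w : ℂ} (hw : w.re = 0) :
    ‖w - 1‖ = ‖w + 1‖ := by
  have h := norm_add_one_sq_sub_norm_sub_one_sq w
  rw [hw, mul_zero, sub_eq_zero] at h
  exact ((pow_left_inj₀ (norm_nonneg _) (norm_nonneg _) two_ne_zero).1 h).symm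

lemma add_one_ne_zero_of_re_nonneg {s : ℂ} (hs : 0 ≤ s.re) : s + 1 ≠ 0 := by
  intro h
  have := congrArg re h
  simp only [add_re, one_re, zero_re] at this
  linarith

lemma norm_sub_one_lt_norm_add_one {s : ℂ} (hs : 0 < s.re) : ‖s - 1‖ < ‖s + 1‖ := by
  have h := norm_add_one_sq_sub_norm_sub_one_sq s
  nlinarith [norm_nonneg (s - 1), norm_nonneg (s + 1)]

end Complex

open Complex

lemma norm_cayleyInv_lt_one {s : ℂ} (hs : 0 < s.re) : ‖cayleyInv s‖ < 1 := by
  rw [cayleyInv, norm_div, div_lt_one (norm_pos_iff.2 (add_one_ne_zero_of_re_nonneg hs.le))]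
  exact norm_sub_one_lt_norm_add_one hs

lemma cayleyInv_sub_cayleyInv {s w : ℂ} (hs : s + 1 ≠ 0) (hw : w + 1 ≠ 0) :
    cayleyInv s - cayleyInv w = 2 * (s - w) / ((s + 1) * (w + 1)) := by
  unfold cayleyInv
  field_simp
  ring

lemma one_sub_norm_cayleyInv {s : ℂ} (hs : 0 < s.re) :
    1 - ‖cayleyInv s‖ = 4 * s.re / (‖s + 1‖ * (‖s + 1‖ + ‖s - 1‖)) := by
  have hp : 0 < ‖s + 1‖ := norm_pos_iff.2 (add_one_ne_zero_of_re_nonneg hs.le)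
  have hpq : 0 < ‖s + 1‖ + ‖s - 1‖ := by positivity
  rw [cayleyInv, norm_div, ← norm_add_one_sq_sub_norm_sub_one_sq]
  field_simp
  ring

lemma stolzRatio_cayleyInv {s w : ℂ} (hs : 0 < s.re) (hw : w + 1 ≠ 0) :
    ‖cayleyInv s - cayleyInv w‖ / (1 - ‖cayleyInv s‖) =
      ‖s - w‖ * (‖s + 1‖ + ‖s - 1‖) / (2 * s.re * ‖w + 1‖) := by
  have hs1 : s + 1 ≠ 0 := add_one_ne_zero_of_re_nonneg hs.le
  have hp : 0 < ‖s + 1‖ := norm_pos_iff.2 hs1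
  have hpq : 0 < ‖s + 1‖ + ‖s - 1‖ := by positivity
  have hw' : 0 < ‖w + 1‖ := norm_pos_iff.2 hw
  rw [one_sub_norm_cayleyInv hs, cayleyInv_sub_cayleyInv hs1 hw, norm_div, norm_mul, norm_mul,
    Complex.norm_two]
  field_simp
  ring

lemma tendsto_stolzRatio_cayleyInv {w v : ℂ} (hw : w.re = 0) (hv : 0 < v.re) :
    Tendsto
      (fun e : ℝ => ‖cayleyInv (w + e * v) - cayleyInv w‖ / (1 - ‖cayleyInv (w + e * v)‖))
      (𝓝[>] 0) (𝓝 (‖v‖ / v.re)) := by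
  have hw1 : w + 1 ≠ 0 := add_one_ne_zero_of_re_nonneg hw.ge
  set g : ℝ → ℝ := fun e =>
    ‖v‖ * (‖w + e * v + 1‖ + ‖w + e * v - 1‖) / (2 * v.re * ‖w + 1‖) with hg
  have hg0 : g 0 = ‖v‖ / v.re := by
    have : 0 < ‖w + 1‖ := norm_pos_iff.2 hw1
    simp only [hg, ofReal_zero, zero_mul, add_zero, norm_sub_one_eq_norm_add_one_of_re_eq_zero hw]
    field_simp
    ring
  have hlim : Tendsto g (𝓝[>] 0) (𝓝 (‖v‖ / v.re)) :=
    hg0 ▸ ((Continuous.tendsto (by fun_prop) 0).mono_left nhdsWithin_le_nhds)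
  refine hlim.congr' (eventually_nhdsWithin_of_forall fun e (he : 0 < e) => ?_)
  simp only [hg]
  have hre : (w + e * v).re = e * v.re := by simp [hw]
  rw [stolzRatio_cayleyInv (hre ▸ mul_pos he hv) hw1, hre, add_sub_cancel_left, norm_mul,
    norm_real, Real.norm_of_nonneg he.le]
  field_simp

/-- `A_ε(t,y) → |1+iy|` as `ε → 0⁺`, and consequently for every
`α > |1+iy|` the points `φ⁻¹(ε + iyε + it)` eventually lie in the Stolz region
`S(α, φ⁻¹(it))`. -/
theorem statement1 (t y : ℝ) :
    Tendsto (fun e : ℝ =>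
        ‖cayleyInv ((e : ℂ) + Complex.I * (y : ℂ) * (e : ℂ) + Complex.I * (t : ℂ))
            - cayleyInv (Complex.I * (t : ℂ))‖ /
          (1 - ‖cayleyInv ((e : ℂ) + Complex.I * (y : ℂ) * (e : ℂ) + Complex.I * (t : ℂ))‖))
      (nhdsWithin 0 (Set.Ioi 0)) (nhds (‖1 + Complex.I * (y : ℂ)‖)) ∧
    ∀ α : ℝ, ‖1 + Complex.I * (y : ℂ)‖ < α →
      ∃ ε₀ : ℝ, 0 < ε₀ ∧ ∀ e : ℝ, 0 < e → e < ε₀ →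
        cayleyInv ((e : ℂ) + Complex.I * (y : ℂ) * (e : ℂ) + Complex.I * (t : ℂ)) ∈
          {z : ℂ | ‖z‖ < 1 ∧
            ‖z - cayleyInv (Complex.I * (t : ℂ))‖ ≤ α * (1 - ‖z‖)} := by
  have hpath : ∀ e : ℝ, (e : ℂ) + I * y * e + I * t = I * t + e * (1 + I * y) :=
    fun e => by ring
  have hlim := tendsto_stolzRatio_cayleyInv (w := I * t) (v := 1 + I * y) (by simp) (by simp)
  simp only [← hpath, show (1 + I * y).re = 1 by simp, div_one] at hlim
  refine ⟨hlim, fun α hα => ?_⟩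
  have hev := (eventually_mem_nhdsWithin (s := Ioi (0 : ℝ)) (a := 0)).and
    (hlim.eventually_lt_const hα)
  obtain ⟨ε₀, hε₀, hsub⟩ := mem_nhdsGT_iff_exists_Ioo_subset.1 hev
  refine ⟨ε₀, hε₀, fun e he heε => ?_⟩
  obtain ⟨-, hratio⟩ := hsub ⟨he, heε⟩
  have hdisc := norm_cayleyInv_lt_one (s := e + I * y * e + I * t) (by simpa using he)
  exact ⟨hdisc, ((div_lt_iff₀ (sub_pos.2 hdisc)).1 hratio).le⟩
end
end

section
/- For every k > 0 one has ∫_ℝ e^{iy} · K^k(y) dy = 1, where K^k(y) = (Γ(1+k)·e/(2π)) · (1 + iy)^{−(1+k)}; in particular ∫_ℝ e^{iy}/(1 + iy)^{1+k} dy = 2π/(Γ(1+k)·e). -/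
/-!
For `Re s > 0` the function `t ↦ t ^ (s - 1) e^{-t}` on `t > 0`, extended by zero, has Fourier
transform `Γ(s) (1 + 2πiξ)^{-s}`: this is the Gamma integral `∫ t^(s-1) e^{-bt} dt = Γ(s) b^{-s}`
at `b = 1 + 2πiξ`, which holds for real `b > 0` by scaling and then on all of `Re b > 0` by the
identity theorem, both sides being holomorphic in `b`. For `Re s > 1` the transform is integrable,
so Fourier inversion at `x > 0` gives `∫ e^{ixy} (1 + iy)^{-s} dy = 2π x^(s-1) e^{-x} / Γ(s)`;
the theorem is the case `s = 1 + k`, `x = 1`.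
-/

open Complex MeasureTheory Filter Topology Set
open scoped Classical

noncomputable section

open scoped Real FourierTransform

section GammaIntegral

variable {s b : ℂ}

lemma norm_cpow_mul_cexp_neg_mul (s b : ℂ) {t : ℝ} (ht : 0 < t) :
    ‖(t : ℂ) ^ (s - 1) * cexp (-b * t)‖ = t ^ (s.re - 1) * Real.exp (-b.re * t) := by
  rw [norm_mul, norm_cpow_eq_rpow_re_of_pos ht, norm_exp]
  simp

lemma continuousOn_cpow_mul_cexp_neg_mul (s b : ℂ) :
    ContinuousOn (fun t : ℝ => (t : ℂ) ^ (s - 1) * cexp (-b * t)) (Ioi 0) :=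
  continuousOn_of_forall_continuousAt fun _ ht =>
    (continuousAt_ofReal_cpow_const _ _ (Or.inr (ne_of_gt ht))).mul (by fun_prop)

lemma integrableOn_cpow_mul_cexp_neg_mul_Ioi (hs : 0 < s.re) (hb : 0 < b.re) :
    IntegrableOn (fun t : ℝ => (t : ℂ) ^ (s - 1) * cexp (-b * t)) (Ioi 0) := by
  have hreal : IntegrableOn (fun t : ℝ => t ^ (s.re - 1) * Real.exp (-b.re * t)) (Ioi 0) := by
    simpa only [Real.rpow_one] using
      integrableOn_rpow_mul_exp_neg_mul_rpow (p := 1) (by linarith) one_pos hb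
  refine hreal.mono' ((continuousOn_cpow_mul_cexp_neg_mul s b).aestronglyMeasurable
    measurableSet_Ioi) ?_
  filter_upwards [ae_restrict_mem measurableSet_Ioi] with t ht
  exact (norm_cpow_mul_cexp_neg_mul s b ht).le

lemma differentiableOn_integral_cpow_mul_cexp_neg_mul (hs : 0 < s.re) :
    DifferentiableOn ℂ (fun b : ℂ => ∫ t : ℝ in Ioi 0, (t : ℂ) ^ (s - 1) * cexp (-b * t))
      {b | 0 < b.re} := by
  intro b₀ (hb₀ : 0 < b₀.re)
  set ε := b₀.re / 2 with hε_def
  have hε : 0 < ε := by positivity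
  have hre : ∀ b ∈ Metric.ball b₀ ε, ε < b.re := fun b hb => by
    have := (abs_re_le_norm (b - b₀)).trans_lt (mem_ball_iff_norm.1 hb)
    rw [sub_re] at this
    linarith [neg_abs_le (b.re - b₀.re)]
  have hbound : IntegrableOn (fun t : ℝ => t ^ s.re * Real.exp (-ε * t)) (Ioi 0) := by
    simpa only [Real.rpow_one] using
      integrableOn_rpow_mul_exp_neg_mul_rpow (p := 1) (by linarith) one_pos hε
  refine (hasDerivAt_integral_of_dominated_loc_of_deriv_le
    (F' := fun b (t : ℝ) => (t : ℂ) ^ (s - 1) * cexp (-b * t) * -t)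
    (Metric.ball_mem_nhds b₀ hε)
    (Eventually.of_forall fun b =>
      (continuousOn_cpow_mul_cexp_neg_mul s b).aestronglyMeasurable measurableSet_Ioi)
    (integrableOn_cpow_mul_cexp_neg_mul_Ioi hs hb₀)
    (((continuousOn_cpow_mul_cexp_neg_mul s b₀).mul
      (by fun_prop : Continuous fun t : ℝ => -(t : ℂ)).continuousOn).aestronglyMeasurable
        measurableSet_Ioi)
    ?_ hbound ?_).2.differentiableAt.differentiableWithinAt
  · filter_upwards [ae_restrict_mem measurableSet_Ioi] with t (ht : 0 < t) b hb
    calc ‖(t : ℂ) ^ (s - 1) * cexp (-b * t) * -t‖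
        = t ^ s.re * Real.exp (-b.re * t) := by
          rw [norm_mul, norm_cpow_mul_cexp_neg_mul s b ht, norm_neg, norm_real,
            Real.norm_of_nonneg ht.le, Real.rpow_sub_one ht.ne']
          field_simp
      _ ≤ t ^ s.re * Real.exp (-ε * t) := by
          gcongr
          nlinarith [hre b hb]
  · filter_upwards with t b _
    have h : HasDerivAt (fun b : ℂ => -b * t) (-t) b := by
      simpa using (hasDerivAt_id b).neg.mul_const (t : ℂ)
    exact (h.cexp.const_mul _).congr_deriv (by ring)

lemma eqOn_re_pos_of_forall_ofReal_eq {f g : ℂ → ℂ} (hf : DifferentiableOn ℂ f {z | 0 < z.re})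
    (hg : DifferentiableOn ℂ g {z | 0 < z.re}) (hfg : ∀ x : ℝ, 0 < x → f x = g x) :
    EqOn f g {z | 0 < z.re} := by
  have hU : IsOpen {z : ℂ | 0 < z.re} := isOpen_lt continuous_const continuous_re
  have hreal : ∃ᶠ x : ℝ in 𝓝[≠] 1, f x = g x :=
    ((eventually_gt_nhds one_pos).filter_mono nhdsWithin_le_nhds).mono hfg |>.frequently
  have hmap : Tendsto ((↑) : ℝ → ℂ) (𝓝[≠] 1) (𝓝[≠] ((1 : ℝ) : ℂ)) :=
    continuous_ofReal.continuousWithinAt.tendsto_nhdsWithin fun x hx => by simpa using hx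
  exact (hf.analyticOnNhd hU).eqOn_of_preconnected_of_frequently_eq (hg.analyticOnNhd hU)
    (convex_halfSpace_re_gt 0).isPreconnected (by simp) (hmap.frequently hreal)

theorem integral_cpow_mul_cexp_neg_mul_Ioi (hs : 0 < s.re) (hb : 0 < b.re) :
    ∫ t : ℝ in Ioi 0, (t : ℂ) ^ (s - 1) * cexp (-b * t) = Gamma s * b ^ (-s) := by
  refine eqOn_re_pos_of_forall_ofReal_eq (g := fun b => Gamma s * b ^ (-s))
    (differentiableOn_integral_cpow_mul_cexp_neg_mul hs) (fun b hb => ?_) (fun r hr => ?_) hb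
  · exact ((differentiableAt_id.cpow (differentiableAt_const _) (Or.inl hb)).const_mul
      _).differentiableWithinAt
  · have harg : arg (r : ℂ) ≠ π := by rw [arg_ofReal_of_nonneg hr.le]; exact Real.pi_ne_zero.symm
    simp_rw [neg_mul]
    rw [Complex.integral_cpow_mul_exp_neg_mul_Ioi hs hr, one_div, inv_cpow _ _ harg, ← cpow_neg,
      mul_comm]

end GammaIntegral

def gammaIntegrand (s : ℂ) : ℝ → ℂ :=
  (Ioi 0).indicator fun t => (t : ℂ) ^ (s - 1) * cexp (-t)

section FourierGamma

variable {s : ℂ}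

lemma integrable_gammaIntegrand (hs : 0 < s.re) : Integrable (gammaIntegrand s) := by
  rw [gammaIntegrand, integrable_indicator_iff measurableSet_Ioi]
  simpa using integrableOn_cpow_mul_cexp_neg_mul_Ioi (b := 1) hs (by simp)

lemma continuousAt_gammaIntegrand (s : ℂ) {x : ℝ} (hx : 0 < x) :
    ContinuousAt (gammaIntegrand s) x := by
  have h := (continuousOn_cpow_mul_cexp_neg_mul s 1).continuousAt (Ioi_mem_nhds hx)
  simp only [neg_mul, one_mul] at h
  exact h.congr (eventuallyEq_of_mem (Ioi_mem_nhds hx) fun t ht => by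
    rw [gammaIntegrand, indicator_of_mem ht])

theorem fourier_gammaIntegrand (hs : 0 < s.re) (ξ : ℝ) :
    𝓕 (gammaIntegrand s) ξ = Gamma s * (1 + I * (2 * π * ξ : ℝ)) ^ (-s) := by
  rw [Real.fourier_real_eq_integral_exp_smul, ← integral_cpow_mul_cexp_neg_mul_Ioi hs (by simp),
    ← integral_indicator measurableSet_Ioi]
  refine integral_congr_ae (Eventually.of_forall fun v => ?_)
  simp only [gammaIntegrand, indicator_apply, smul_eq_mul]
  split_ifs
  · rw [mul_left_comm, ← Complex.exp_add]
    congr 2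
    push_cast
    ring
  · rw [mul_zero]

lemma norm_one_add_I_mul_cpow_neg_le (hs : 0 ≤ s.re) (t : ℝ) :
    ‖(1 + I * t) ^ (-s)‖ ≤ 2 ^ s.re * Real.exp (π * |s.im|) * (1 + |t|) ^ (-s.re) := by
  set z : ℂ := 1 + I * t
  have hre : 1 ≤ ‖z‖ := by simpa [z] using abs_re_le_norm z
  have him : |t| ≤ ‖z‖ := by simpa [z] using abs_im_le_norm z
  have hz : (1 + |t|) / 2 ≤ ‖z‖ := by linarith
  have harg : arg z * s.im ≤ π * |s.im| :=
    (le_abs_self _).trans (by rw [abs_mul]; gcongr; exact abs_arg_le_pi z)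
  calc ‖z ^ (-s)‖
      ≤ ‖z‖ ^ (-s.re) / Real.exp (arg z * (-s.im)) := by simpa using norm_cpow_le z (-s)
    _ = ‖z‖ ^ (-s.re) * Real.exp (arg z * s.im) := by
        rw [div_eq_mul_inv, ← Real.exp_neg, mul_neg, neg_neg]
    _ ≤ ((1 + |t|) / 2) ^ (-s.re) * Real.exp (π * |s.im|) := by
        exact mul_le_mul (Real.rpow_le_rpow_of_nonpos (by positivity) hz (by linarith))
          (Real.exp_le_exp.2 harg) (by positivity) (by positivity)
    _ = 2 ^ s.re * Real.exp (π * |s.im|) * (1 + |t|) ^ (-s.re) := by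
        rw [Real.div_rpow (by positivity) zero_le_two, Real.rpow_neg zero_le_two]
        field_simp

lemma integrable_one_add_I_mul_cpow_neg (hs : 1 < s.re) :
    Integrable fun t : ℝ => (1 + I * t) ^ (-s) := by
  refine ((integrable_one_add_norm (E := ℝ) (μ := volume) (r := s.re) (by simpa using hs)).const_mul
    (2 ^ s.re * Real.exp (π * |s.im|))).mono' ?_ (ae_of_all _ fun t => ?_)
  · refine (Continuous.cpow (by fun_prop) continuous_const fun t => ?_).aestronglyMeasurable
    exact Or.inl (by simp)
  · simpa using norm_one_add_I_mul_cpow_neg_le (by linarith) t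

theorem integral_cexp_mul_div_one_add_I_mul_cpow (hs : 1 < s.re) {x : ℝ} (hx : 0 < x) :
    ∫ y : ℝ, cexp (I * y * x) / (1 + I * y) ^ s = 2 * π * x ^ (s - 1) * cexp (-x) / Gamma s := by
  have hs₀ : 0 < s.re := by linarith
  have hF : 𝓕 (gammaIntegrand s) = fun ξ : ℝ => Gamma s * (1 + I * (2 * π * ξ : ℝ)) ^ (-s) :=
    funext (fourier_gammaIntegrand hs₀)
  have hF_int : Integrable (𝓕 (gammaIntegrand s)) := by
    rw [hF]
    exact ((integrable_one_add_I_mul_cpow_neg hs).comp_mul_left' (by positivity)).const_mul _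
  set g : ℝ → ℂ := fun y => cexp (I * y * x) / (1 + I * y) ^ s
  have hinv : Gamma s * ((2 * π : ℂ)⁻¹ * ∫ y, g y) = x ^ (s - 1) * cexp (-x) :=
    calc Gamma s * ((2 * π : ℂ)⁻¹ * ∫ y, g y)
        = ∫ ξ : ℝ, Gamma s * g (2 * π * ξ) := by
          rw [integral_const_mul, Measure.integral_comp_mul_left, abs_of_pos (by positivity),
            real_smul]
          norm_cast
      _ = 𝓕⁻ (𝓕 (gammaIntegrand s)) x := by
          rw [Real.fourierInv_eq', hF]
          congr 1 with ξ
          simp only [g, div_eq_mul_inv, ofReal_mul, ofReal_ofNat, RCLike.inner_apply,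
            Real.ringHom_apply, cpow_neg, smul_eq_mul]
          ring_nf
      _ = x ^ (s - 1) * cexp (-x) := by
          rw [(integrable_gammaIntegrand hs₀).fourierInv_fourier_eq hF_int
            (continuousAt_gammaIntegrand s hx), gammaIntegrand, indicator_of_mem (mem_Ioi.2 hx)]
  have hΓ : Gamma s ≠ 0 := Gamma_ne_zero_of_re_pos hs₀
  have h2π : (2 * π : ℂ) ≠ 0 := mul_ne_zero two_ne_zero (ofReal_ne_zero.2 Real.pi_ne_zero)
  rw [mul_assoc, ← hinv, mul_div_assoc, mul_div_cancel_left₀ _ hΓ, mul_inv_cancel_left₀ h2π]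

/-- For every `k > 0`: `∫_ℝ e^{iy} K^k(y) dy = 1`, where
`K^k(y) = (Γ(1+k)e/(2π))(1+iy)^{-(1+k)}`; in particular
`∫_ℝ e^{iy}/(1+iy)^{1+k} dy = 2π/(Γ(1+k)e)`. -/
theorem statement7 (k : ℝ) (hk : 0 < k) :
    (∫ y : ℝ, Complex.exp (Complex.I * (y : ℂ)) *
        (((Real.Gamma (1 + k) * Real.exp 1 / (2 * Real.pi) : ℝ) : ℂ) /
          (1 + Complex.I * (y : ℂ)) ^ ((1 + k : ℝ) : ℂ)) = 1) ∧
    (∫ y : ℝ, Complex.exp (Complex.I * (y : ℂ)) / (1 + Complex.I * (y : ℂ)) ^ ((1 + k : ℝ) : ℂ))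
      = ((2 * Real.pi / (Real.Gamma (1 + k) * Real.exp 1) : ℝ) : ℂ) := by
  have hs : 1 < ((1 + k : ℝ) : ℂ).re := by simp [hk]
  have hΓ : (Real.Gamma (1 + k) : ℂ) ≠ 0 :=
    ofReal_ne_zero.2 (Real.Gamma_pos_of_pos (by linarith)).ne'
  have hJ := integral_cexp_mul_div_one_add_I_mul_cpow hs one_pos
  simp only [ofReal_one, mul_one, one_cpow, Gamma_ofReal, Complex.exp_neg] at hJ
  refine ⟨?_, ?_⟩
  · simp_rw [mul_div_left_comm (cexp _), integral_const_mul, hJ]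
    push_cast
    field_simp
  · rw [hJ]
    push_cast
    field_simp
end FourierGamma
end
end

section
/- Let k > ℓ ≥ 0. Then there is a constant C(k,ℓ) > 0 such that for every x > 1 and every y ∈ ℝ the kernel R^{k,ℓ}(x,y) satisfies: |R^{k,ℓ}(x,y)| ≤ C(k,ℓ) · x/|1 + iyx|^{1+k−ℓ} if k < 1; |R^{k,ℓ}(x,y)| ≤ C(k,ℓ) · (x/|1 + iyx|² + x/|1 + iyx|^{1+k−ℓ}) if k ≥ 1 and k − ℓ < 1; and |R^{k,ℓ}(x,y)| ≤ C(k,ℓ) · x/|1 + iyx|² if k ≥ 1 and k − ℓ ≥ 1. -/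
/-!
Up to the factor `x`, the modulus of the integrand of `R^{k,ℓ}(x,y)` is at most a constant times
the Cauchy density `P_{1/x}(t - y)` times the weight `(1 + |xt|)^{-q}`, `q = 1 + k - ℓ > 1`: the
factor `(1 + x⁻¹ + it)^ℓ` costs `(1 + |xt|)^ℓ` and `K_x^k(t)` gains `(1 + |xt|)^{-(1+k)}`.
After the substitution `s = xt`, with `b = xy`, split the line at `|s - b| = |b|/2`. Near `b` the
weight is `≲ (1 + |b|)^{-q}` and the density has mass one; away from `b` the density is
`≲ (1 + |b|)^{-2}` and the weight is integrable. Since `|1 + ixy| ≤ 1 + |b|`, this gives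
`|R^{k,ℓ}(x,y)| ≲ x/|1 + ixy|^q + x/|1 + ixy|^2`, and each case keeps the dominant term.
-/

open Complex MeasureTheory Filter Topology Set
open scoped Classical

noncomputable section

open ProbabilityTheory
open scoped Real

lemma one_le_norm_one_add_I_mul (a : ℝ) : 1 ≤ ‖1 + I * a‖ := by
  simpa using Complex.abs_re_le_norm (1 + I * a)

lemma norm_one_add_I_mul_le (a : ℝ) : ‖1 + I * a‖ ≤ 1 + |a| := by
  simpa using norm_add_le (1 : ℂ) (I * a)

lemma one_add_abs_le_two_mul_norm_one_add_I_mul (a : ℝ) : 1 + |a| ≤ 2 * ‖1 + I * a‖ := by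
  have him : |a| ≤ ‖1 + I * a‖ := by simpa using Complex.abs_im_le_norm (1 + I * a)
  linarith [one_le_norm_one_add_I_mul a]

lemma poisson_inv_sub_eq {x : ℝ} (hx : 0 < x) (y t : ℝ) :
    poisson x⁻¹ (t - y) = x * cauchyPDFReal (x * y) 1 (x * t) := by
  rw [poisson, cauchyPDFReal_def, NNReal.coe_one]
  field_simp
  ring

lemma integrable_one_add_abs_rpow_neg {q : ℝ} (hq : 1 < q) :
    Integrable (fun s : ℝ => (1 + |s|) ^ (-q)) := by
  simpa using integrable_one_add_norm (E := ℝ) (μ := volume) (r := q) (by simpa using hq)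

lemma integrable_cauchyPDFReal_mul_rpow_neg {q : ℝ} (hq : 0 ≤ q) (b : ℝ) :
    Integrable (fun s : ℝ => cauchyPDFReal b 1 s * (1 + |s|) ^ (-q)) := by
  refine (integrable_cauchyPDFReal b (γ := 1)).mono' (by fun_prop) (ae_of_all _ fun s => ?_)
  rw [norm_mul, Real.norm_of_nonneg (cauchyPDF_pos b one_ne_zero s).le,
    Real.norm_of_nonneg (by positivity)]
  exact mul_le_of_le_one_right (cauchyPDF_pos b one_ne_zero s).le
    (Real.rpow_le_one_of_one_le_of_nonpos (by linarith [abs_nonneg s]) (by linarith))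

lemma cauchyPDFReal_mul_rpow_neg_le {q : ℝ} (hq : 0 ≤ q) (b s : ℝ) :
    cauchyPDFReal b 1 s * (1 + |s|) ^ (-q) ≤
      2 ^ q / (1 + |b|) ^ q * cauchyPDFReal b 1 s + 8 / π / (1 + |b|) ^ 2 * (1 + |s|) ^ (-q) := by
  have hp := (cauchyPDF_pos b one_ne_zero s).le
  rcases le_or_gt |s - b| (|b| / 2) with hnear | hfar
  · have hb : (1 + |b|) / 2 ≤ 1 + |s| := by
      linarith [abs_sub_abs_le_abs_sub b s, abs_sub_comm b s]
    have hweight : (1 + |s|) ^ (-q) ≤ 2 ^ q / (1 + |b|) ^ q := by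
      calc (1 + |s|) ^ (-q) ≤ ((1 + |b|) / 2) ^ (-q) :=
            Real.rpow_le_rpow_of_nonpos (by positivity) hb (by linarith)
        _ = 2 ^ q / (1 + |b|) ^ q := by
            rw [Real.rpow_neg (by positivity), Real.div_rpow (by positivity) (by norm_num),
              inv_div]
    calc cauchyPDFReal b 1 s * (1 + |s|) ^ (-q) ≤ 2 ^ q / (1 + |b|) ^ q * cauchyPDFReal b 1 s := by
          rw [mul_comm]; exact mul_le_mul_of_nonneg_right hweight hp
      _ ≤ _ := le_add_of_nonneg_right (by positivity)
  · have hsq : b ^ 2 ≤ 4 * (s - b) ^ 2 := by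
      nlinarith [sq_abs b, sq_abs (s - b), abs_nonneg b]
    have hdensity : cauchyPDFReal b 1 s ≤ 8 / π / (1 + |b|) ^ 2 := by
      rw [cauchyPDFReal_def, NNReal.coe_one, div_div, le_div_iff₀ (by positivity)]
      have hden : (1 + |b|) ^ 2 ≤ 8 * ((s - b) ^ 2 + 1 ^ 2) := by
        nlinarith [sq_abs b, sq_nonneg (|b| - 1)]
      calc π⁻¹ * 1 * ((s - b) ^ 2 + 1 ^ 2)⁻¹ * (π * (1 + |b|) ^ 2)
          = (1 + |b|) ^ 2 / ((s - b) ^ 2 + 1 ^ 2) := by field_simp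
        _ ≤ 8 := by rw [div_le_iff₀ (by positivity)]; exact hden
    calc cauchyPDFReal b 1 s * (1 + |s|) ^ (-q) ≤ 8 / π / (1 + |b|) ^ 2 * (1 + |s|) ^ (-q) :=
          mul_le_mul_of_nonneg_right hdensity (by positivity)
      _ ≤ _ := le_add_of_nonneg_left (by positivity)

lemma integral_cauchyPDFReal_mul_rpow_neg_le {q : ℝ} (hq : 1 < q) (b : ℝ) :
    ∫ s, cauchyPDFReal b 1 s * (1 + |s|) ^ (-q) ≤
      2 ^ q / (1 + |b|) ^ q + 8 / π * (∫ s : ℝ, (1 + |s|) ^ (-q)) / (1 + |b|) ^ 2 := by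
  have hint := integrable_one_add_abs_rpow_neg hq
  calc ∫ s, cauchyPDFReal b 1 s * (1 + |s|) ^ (-q)
      ≤ ∫ s, (2 ^ q / (1 + |b|) ^ q * cauchyPDFReal b 1 s
          + 8 / π / (1 + |b|) ^ 2 * (1 + |s|) ^ (-q)) :=
        integral_mono_of_nonneg
          (ae_of_all _ fun s => mul_nonneg (cauchyPDF_pos b one_ne_zero s).le (by positivity))
          (((integrable_cauchyPDFReal b).const_mul _).add (hint.const_mul _))
          (ae_of_all _ (cauchyPDFReal_mul_rpow_neg_le (by linarith) b))
    _ = _ := by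
        rw [integral_add ((integrable_cauchyPDFReal b).const_mul _) (hint.const_mul _),
          integral_const_mul, integral_const_mul, integral_cauchyPDFReal_eq_one b one_ne_zero]
        ring

lemma norm_cpow_one_add_inv_add_I_mul_le {x l : ℝ} (hx : 1 ≤ x) (hl : 0 ≤ l) (t : ℝ) :
    ‖(1 + ((x⁻¹ : ℝ) : ℂ) + I * t) ^ ((l : ℝ) : ℂ)‖ ≤ 2 ^ l * (1 + |x * t|) ^ l := by
  have hbase : ‖1 + ((x⁻¹ : ℝ) : ℂ) + I * t‖ ≤ 2 * (1 + |x * t|) := by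
    have hinv : x⁻¹ ≤ 1 := inv_le_one_of_one_le₀ hx
    have ht : |t| ≤ |x * t| := by
      rw [abs_mul]; exact le_mul_of_one_le_left (abs_nonneg t) (hx.trans (le_abs_self x))
    calc ‖1 + ((x⁻¹ : ℝ) : ℂ) + I * t‖ ≤ ‖(1 : ℂ)‖ + ‖((x⁻¹ : ℝ) : ℂ)‖ + ‖I * t‖ :=
          norm_add₃_le
      _ = 1 + x⁻¹ + |t| := by
          simp [zero_le_one.trans hx]
      _ ≤ 2 * (1 + |x * t|) := by linarith [abs_nonneg (x * t)]
  rw [norm_cpow_real, ← Real.mul_rpow (by norm_num) (by positivity)]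
  exact Real.rpow_le_rpow (norm_nonneg _) hbase hl

lemma norm_Kker_le {k x : ℝ} (hk : 0 ≤ 1 + k) (hx : 0 < x) (t : ℝ) :
    ‖Kker k x t‖ ≤ |Real.Gamma (1 + k) * Real.exp 1 / (2 * π)| * 2 ^ (1 + k) * x *
      (1 + |x * t|) ^ (-(1 + k)) := by
  have hw : (1 + I * x * t : ℂ) = 1 + I * ((x * t : ℝ) : ℂ) := by push_cast; ring
  have hlow : (1 + |x * t|) / 2 ≤ ‖1 + I * ((x * t : ℝ) : ℂ)‖ := by
    linarith [one_add_abs_le_two_mul_norm_one_add_I_mul (x * t)]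
  have hpow : ((1 + |x * t|) / 2) ^ (1 + k) ≤ ‖1 + I * ((x * t : ℝ) : ℂ)‖ ^ (1 + k) :=
    Real.rpow_le_rpow (by positivity) hlow hk
  rw [Kker, hw, norm_div, norm_mul, norm_cpow_real, Complex.norm_real, Complex.norm_real,
    Real.norm_eq_abs, Real.norm_of_nonneg hx.le]
  calc |Real.Gamma (1 + k) * Real.exp 1 / (2 * π)| * x / ‖1 + I * ((x * t : ℝ) : ℂ)‖ ^ (1 + k)
      ≤ |Real.Gamma (1 + k) * Real.exp 1 / (2 * π)| * x / ((1 + |x * t|) / 2) ^ (1 + k) :=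
        div_le_div_of_nonneg_left (by positivity) (by positivity) hpow
    _ = _ := by
        rw [Real.div_rpow (by positivity) (by norm_num), Real.rpow_neg (by positivity)]
        field_simp

lemma norm_Rker_le_integral {k l x : ℝ} (hl : 0 ≤ l) (hk : l < k) (hx : 1 ≤ x) (y : ℝ) :
    ‖Rker k l x y‖ ≤ 2 ^ l * (|Real.Gamma (1 + k) * Real.exp 1 / (2 * π)| * 2 ^ (1 + k)) * x *
      ∫ s, cauchyPDFReal (x * y) 1 s * (1 + |s|) ^ (-(1 + k - l)) := by
  set c := 2 ^ l * (|Real.Gamma (1 + k) * Real.exp 1 / (2 * π)| * 2 ^ (1 + k))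
  set h := fun s : ℝ => cauchyPDFReal (x * y) 1 s * (1 + |s|) ^ (-(1 + k - l))
  have hx0 : 0 < x := zero_lt_one.trans_le hx
  have hh : Integrable h := integrable_cauchyPDFReal_mul_rpow_neg (by linarith) _
  have hpoint : ∀ t : ℝ,
      ‖((poisson x⁻¹ (t - y) : ℝ) : ℂ) * Complex.exp (I * t * x) *
        (1 + ((x⁻¹ : ℝ) : ℂ) + I * t) ^ ((l : ℝ) : ℂ) * Kker k x t‖ ≤ c * x * (x * h (x * t)) := by
    intro t
    have hp := (cauchyPDF_pos (x * y) one_ne_zero (x * t)).le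
    have hexp : ‖Complex.exp (I * t * x)‖ = 1 := by
      rw [Complex.norm_exp]; simp
    rw [norm_mul, norm_mul, norm_mul, hexp, mul_one, Complex.norm_real, poisson_inv_sub_eq hx0,
      Real.norm_of_nonneg (by positivity)]
    calc x * cauchyPDFReal (x * y) 1 (x * t) *
          ‖(1 + ((x⁻¹ : ℝ) : ℂ) + I * t) ^ ((l : ℝ) : ℂ)‖ * ‖Kker k x t‖
        ≤ x * cauchyPDFReal (x * y) 1 (x * t) * (2 ^ l * (1 + |x * t|) ^ l) *
          (|Real.Gamma (1 + k) * Real.exp 1 / (2 * π)| * 2 ^ (1 + k) * x *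
            (1 + |x * t|) ^ (-(1 + k))) := by
          gcongr
          · exact norm_cpow_one_add_inv_add_I_mul_le hx hl t
          · exact norm_Kker_le (by linarith) hx0 t
      _ = c * x * (x * h (x * t)) := by
          simp only [c, h]
          rw [show -(1 + k - l) = l + -(1 + k) by ring,
            Real.rpow_add (by positivity : (0 : ℝ) < 1 + |x * t|)]
          ring
  calc ‖Rker k l x y‖ ≤ ∫ t, c * x * (x * h (x * t)) :=
        norm_integral_le_of_norm_le (((hh.comp_mul_left' hx0.ne').const_mul x).const_mul _)
          (ae_of_all _ hpoint)
    _ = c * x * ∫ s, h s := by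
        rw [integral_const_mul, integral_const_mul, Measure.integral_comp_mul_left,
          abs_of_pos (inv_pos.2 hx0), smul_eq_mul, mul_inv_cancel_left₀ hx0.ne']

lemma exists_norm_Rker_le {k l : ℝ} (hl : 0 ≤ l) (hk : l < k) :
    ∃ C > 0, ∀ x : ℝ, 1 < x → ∀ y : ℝ,
      ‖Rker k l x y‖ ≤ C * (x / ‖1 + I * y * x‖ ^ (1 + k - l) + x / ‖1 + I * y * x‖ ^ (2 : ℝ)) := by
  set q := 1 + k - l
  set c := 2 ^ l * (|Real.Gamma (1 + k) * Real.exp 1 / (2 * π)| * 2 ^ (1 + k))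
  set M := 8 / π * ∫ s : ℝ, (1 + |s|) ^ (-q)
  have hq : 1 < q := by linarith
  have hc : 0 < c := by
    have := Real.Gamma_pos_of_pos (show 0 < 1 + k by linarith)
    positivity
  have hM : 0 ≤ M := by
    have : 0 ≤ ∫ s : ℝ, (1 + |s|) ^ (-q) :=
      integral_nonneg fun s => Real.rpow_nonneg (by positivity) _
    positivity
  refine ⟨c * 2 ^ q + c * M, by positivity, fun x hx y => ?_⟩
  have hA : ‖1 + I * y * x‖ = ‖1 + I * ((x * y : ℝ) : ℂ)‖ := by push_cast; ring_nf
  set A := ‖1 + I * y * x‖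
  have hA1 : 1 ≤ A := hA ▸ one_le_norm_one_add_I_mul _
  have hAb : A ≤ 1 + |x * y| := hA ▸ norm_one_add_I_mul_le _
  have hAq : 2 ^ q / (1 + |x * y|) ^ q ≤ 2 ^ q / A ^ q := by gcongr
  have hA2 : M / (1 + |x * y|) ^ 2 ≤ M / A ^ (2 : ℝ) := by
    rw [Real.rpow_two]; gcongr
  calc ‖Rker k l x y‖ ≤ c * x * ∫ s, cauchyPDFReal (x * y) 1 s * (1 + |s|) ^ (-q) :=
        norm_Rker_le_integral hl hk hx.le y
    _ ≤ c * x * (2 ^ q / A ^ q + M / A ^ (2 : ℝ)) := by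
        gcongr
        calc _ ≤ 2 ^ q / (1 + |x * y|) ^ q + M / (1 + |x * y|) ^ 2 :=
              integral_cauchyPDFReal_mul_rpow_neg_le hq _
          _ ≤ _ := add_le_add hAq hA2
    _ = c * 2 ^ q * (x / A ^ q) + c * M * (x / A ^ (2 : ℝ)) := by ring
    _ ≤ _ := by
        rw [mul_add]
        gcongr
        · linarith [mul_nonneg hc.le hM]
        · linarith [mul_nonneg hc.le (by positivity : (0 : ℝ) ≤ 2 ^ q)]

lemma div_rpow_le_div_rpow_of_exponent_le {a x p r : ℝ} (ha : 1 ≤ a) (hx : 0 ≤ x) (hpr : p ≤ r) :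
    x / a ^ r ≤ x / a ^ p :=
  div_le_div_of_nonneg_left hx (by positivity) (Real.rpow_le_rpow_of_exponent_le ha hpr)

/-- (Kernel estimates.) For `k > ℓ ≥ 0` there is `C(k,ℓ) > 0` such that for
all `x > 1` and `y ∈ ℝ` the kernel `R^{k,ℓ}(x,y)` satisfies the stated case distinction. -/
theorem statement11 (k l : ℝ) (hl : 0 ≤ l) (hk : l < k) :
    ∃ C : ℝ, 0 < C ∧ ∀ x : ℝ, 1 < x → ∀ y : ℝ,
      (k < 1 →
        ‖Rker k l x y‖
          ≤ C * x / ‖1 + Complex.I * (y : ℂ) * (x : ℂ)‖ ^ (1 + k - l)) ∧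
      (1 ≤ k → k - l < 1 →
        ‖Rker k l x y‖
          ≤ C * (x / ‖1 + Complex.I * (y : ℂ) * (x : ℂ)‖ ^ (2 : ℝ)
              + x / ‖1 + Complex.I * (y : ℂ) * (x : ℂ)‖ ^ (1 + k - l))) ∧
      (1 ≤ k → 1 ≤ k - l →
        ‖Rker k l x y‖
          ≤ C * x / ‖1 + Complex.I * (y : ℂ) * (x : ℂ)‖ ^ (2 : ℝ)) := by
  obtain ⟨C, hC, hR⟩ := exists_norm_Rker_le hl hk
  refine ⟨2 * C, by positivity, fun x hx y => ?_⟩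
  have hA : 1 ≤ ‖1 + I * y * x‖ := by simpa using Complex.abs_re_le_norm (1 + I * y * x)
  have hx0 : 0 ≤ x := by linarith
  specialize hR x hx y
  set A := ‖1 + I * y * x‖
  have hq : 0 ≤ x / A ^ (1 + k - l) := by positivity
  have h2 : 0 ≤ x / A ^ (2 : ℝ) := by positivity
  simp only [mul_div_assoc]
  refine ⟨fun hk1 => ?_, fun _ _ => by nlinarith, fun _ hkl => ?_⟩
  · have := div_rpow_le_div_rpow_of_exponent_le hA hx0 (show 1 + k - l ≤ 2 by linarith)
    nlinarith
  · have := div_rpow_le_div_rpow_of_exponent_le hA hx0 (show 2 ≤ 1 + k - l by linarith)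
    nlinarith
end
end

section
/- Let k > ℓ ≥ 0. Then for every δ > 0, lim_{x→∞} ∫_{{y ∈ ℝ : |y| > δ}} |R^{k,ℓ}(x,y)| dy = 0. -/
open Complex MeasureTheory Filter Topology Set
open scoped Classical

noncomputable section

/-!
For `x ≥ 1` the integrand of `R^{k,ℓ}(x, ·)` is dominated by `C · P_{x⁻¹}(t - y) · x⟨xt⟩^{ℓ-1-k}`,
where `⟨s⟩ = (1 + s²)^{1/2}`, since `|1 + x⁻¹ + it| ≤ 2⟨xt⟩` and `|1 + ixt| = ⟨xt⟩`. Both factors are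
`L¹`-dilations at scale `x⁻¹`, so `|R^{k,ℓ}(x, y)| ≤ C x F(xy)` with `F = ⟨·⟩^{ℓ-1-k} ⋆ P_1`, which
is integrable because `k - ℓ > 0`. Hence `∫_{|y|>δ} |R^{k,ℓ}(x, y)| dy ≤ C ∫_{|u|>xδ} F(u) du`, a
tail of a fixed integrable function.
-/

open scoped Convolution

lemma poisson_nonneg {u : ℝ} (hu : 0 ≤ u) (t : ℝ) : 0 ≤ poisson u t := by
  unfold poisson
  positivity

lemma poisson_one_le (t : ℝ) : poisson 1 t ≤ 1 / Real.pi := by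
  unfold poisson
  rw [mul_one]
  exact div_le_self (by positivity) (by nlinarith)

lemma continuous_poisson_one : Continuous (poisson 1) := by
  unfold poisson
  exact continuous_const.div (by fun_prop) fun t => by positivity

lemma poisson_neg (u t : ℝ) : poisson u (-t) = poisson u t := by
  simp [poisson]

lemma integrable_poisson_one : Integrable (poisson 1) := by
  have h : poisson 1 = fun t => 1 / Real.pi * (1 + t ^ 2)⁻¹ := by
    funext t
    simp [poisson, div_eq_mul_inv]
  rw [h]
  exact integrable_inv_one_add_sq.const_mul _

lemma poisson_inv_eq {x : ℝ} (hx : 0 < x) (s : ℝ) : poisson x⁻¹ s = x * poisson 1 (x * s) := by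
  unfold poisson
  field_simp

lemma integrable_mul_poisson_one_sub {φ : ℝ → ℝ} (hφ : Integrable φ) (v : ℝ) :
    Integrable fun u => φ u * poisson 1 (v - u) :=
  hφ.mul_bdd (continuous_poisson_one.comp (continuous_sub_left v)).aestronglyMeasurable
    (ae_of_all _ fun u => by
      rw [Real.norm_of_nonneg (poisson_nonneg zero_le_one _)]
      exact poisson_one_le _)

section Rescaling

variable {φ : ℝ → ℝ} {x : ℝ}

lemma poisson_inv_mul_rescale_eq (hx : 0 < x) (y t : ℝ) :
    poisson x⁻¹ (t - y) * (x * φ (x * t)) =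
      x * (x * (φ (x * t) * poisson 1 (x * y - x * t))) := by
  rw [poisson_inv_eq hx, ← poisson_neg, neg_mul_eq_mul_neg, neg_sub, mul_sub]
  ring

lemma integrable_poisson_inv_mul_rescale (hφ : Integrable φ) (hx : 0 < x) (y : ℝ) :
    Integrable fun t => poisson x⁻¹ (t - y) * (x * φ (x * t)) := by
  simp_rw [poisson_inv_mul_rescale_eq hx]
  exact (((integrable_mul_poisson_one_sub hφ (x * y)).comp_mul_left' hx.ne').const_mul x).const_mul x

lemma integral_poisson_inv_mul_rescale (φ : ℝ → ℝ) (hx : 0 < x) (y : ℝ) :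
    ∫ t, poisson x⁻¹ (t - y) * (x * φ (x * t)) = x * (φ ⋆ poisson 1) (x * y) := by
  simp_rw [poisson_inv_mul_rescale_eq hx, integral_const_mul, convolution_lsmul, smul_eq_mul,
    Measure.integral_comp_mul_left (fun u => φ u * poisson 1 (x * y - u)), abs_inv,
    abs_of_pos hx, smul_eq_mul, mul_inv_cancel_left₀ hx.ne']

end Rescaling

def rkerMajorant (r : ℝ) : ℝ → ℝ := (fun s : ℝ => (1 + ‖s‖ ^ 2) ^ (-r / 2)) ⋆ poisson 1

lemma integrable_rkerMajorant {r : ℝ} (hr : 1 < r) : Integrable (rkerMajorant r) :=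
  (integrable_rpow_neg_one_add_norm_sq (by simpa using hr)).integrable_convolution _
    integrable_poisson_one

lemma norm_one_add_I_mul (s : ℝ) : ‖1 + I * s‖ = √(1 + s ^ 2) := by
  rw [mul_comm, ← ofReal_one, norm_add_mul_I, one_pow]

lemma norm_one_add_I_mul_rpow_neg (s r : ℝ) :
    ‖1 + I * s‖ ^ (-r) = (1 + ‖s‖ ^ 2) ^ (-r / 2) := by
  rw [norm_one_add_I_mul, Real.norm_eq_abs, sq_abs, Real.sqrt_eq_rpow,
    ← Real.rpow_mul (by positivity)]
  ring_nf

lemma norm_one_add_inv_add_I_mul_le {x : ℝ} (hx : 1 ≤ x) (t : ℝ) :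
    ‖1 + ((x⁻¹ : ℝ) : ℂ) + I * t‖ ≤ 2 * ‖1 + I * ((x * t : ℝ) : ℂ)‖ := by
  have hxi : x⁻¹ ≤ 1 := inv_le_one_of_one_le₀ hx
  have hxi0 : 0 ≤ x⁻¹ := by positivity
  rw [show 1 + ((x⁻¹ : ℝ) : ℂ) + I * t = ((1 + x⁻¹ : ℝ) : ℂ) + t * I by push_cast; ring,
    norm_add_mul_I, norm_one_add_I_mul, ← Real.sqrt_sq zero_le_two,
    ← Real.sqrt_mul (by norm_num)]
  apply Real.sqrt_le_sqrt
  nlinarith [mul_nonneg (sub_nonneg.2 (one_le_pow₀ hx : 1 ≤ x ^ 2)) (sq_nonneg t)]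

lemma norm_Rker_integrand_le {k l x : ℝ} (hl : 0 ≤ l) (hx : 1 ≤ x) (y t : ℝ) :
    ‖((poisson x⁻¹ (t - y) : ℝ) : ℂ) * Complex.exp (I * t * x) *
        (1 + ((x⁻¹ : ℝ) : ℂ) + I * t) ^ ((l : ℝ) : ℂ) * Kker k x t‖ ≤
      2 ^ l * |Real.Gamma (1 + k) * Real.exp 1 / (2 * Real.pi)| *
        (poisson x⁻¹ (t - y) * (x * (1 + ‖x * t‖ ^ 2) ^ (-(1 + k - l) / 2))) := by
  have hx0 : 0 < x := by linarith
  set c := |Real.Gamma (1 + k) * Real.exp 1 / (2 * Real.pi)|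
  set w := ‖1 + I * ((x * t : ℝ) : ℂ)‖ with hw_def
  have hw : 0 < w := by rw [hw_def, norm_one_add_I_mul]; positivity
  have he : ‖Complex.exp (I * t * x)‖ = 1 := by simp [norm_exp]
  have hB : ‖(1 + ((x⁻¹ : ℝ) : ℂ) + I * t) ^ ((l : ℝ) : ℂ)‖ ≤ 2 ^ l * w ^ l := by
    rw [norm_cpow_real, ← Real.mul_rpow zero_le_two hw.le]
    exact Real.rpow_le_rpow (norm_nonneg _) (norm_one_add_inv_add_I_mul_le hx t) hl
  have hK : ‖Kker k x t‖ = c * x / w ^ (1 + k) := by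
    rw [Kker, norm_div, norm_mul, norm_real, norm_real, Real.norm_eq_abs,
      Real.norm_of_nonneg hx0.le, norm_cpow_real, hw_def, ofReal_mul, mul_assoc]
  rw [norm_mul, norm_mul, norm_mul, he, hK, norm_real,
    Real.norm_of_nonneg (poisson_nonneg (by positivity) _), mul_one,
    ← norm_one_add_I_mul_rpow_neg, ← hw_def]
  calc poisson x⁻¹ (t - y) * ‖(1 + ((x⁻¹ : ℝ) : ℂ) + I * t) ^ ((l : ℝ) : ℂ)‖ *
        (c * x / w ^ (1 + k))
      ≤ poisson x⁻¹ (t - y) * (2 ^ l * w ^ l) * (c * x / w ^ (1 + k)) := by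
        gcongr
        exact poisson_nonneg (by positivity) _
    _ = 2 ^ l * c * (poisson x⁻¹ (t - y) * (x * w ^ (-(1 + k - l)))) := by
        rw [show -(1 + k - l) = l - (1 + k) by ring, Real.rpow_sub hw]
        ring

lemma norm_Rker_le {k l x : ℝ} (hl : 0 ≤ l) (hlk : l < k) (hx : 1 ≤ x) (y : ℝ) :
    ‖Rker k l x y‖ ≤ 2 ^ l * |Real.Gamma (1 + k) * Real.exp 1 / (2 * Real.pi)| *
      (x * rkerMajorant (1 + k - l) (x * y)) := by
  have hx0 : 0 < x := by linarith
  have hφ : Integrable fun s : ℝ => (1 + ‖s‖ ^ 2) ^ (-(1 + k - l) / 2) :=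
    integrable_rpow_neg_one_add_norm_sq (by simp; linarith)
  rw [rkerMajorant, ← integral_poisson_inv_mul_rescale _ hx0, ← integral_const_mul]
  exact norm_integral_le_of_norm_le ((integrable_poisson_inv_mul_rescale hφ hx0 y).const_mul _)
    (ae_of_all _ (norm_Rker_integrand_le hl hx y))

lemma tendsto_setIntegral_lt_abs {E : Type*} [NormedAddCommGroup E] [NormedSpace ℝ E]
    {F : ℝ → E} (hF : Integrable F) :
    Tendsto (fun R => ∫ u in {u | R < |u|}, F u) atTop (𝓝 0) := by
  have h := tendsto_setIntegral_of_antitone (μ := volume) (s := fun R : ℝ => {u : ℝ | R < |u|})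
    (fun R => measurableSet_lt measurable_const measurable_abs)
    (fun R S hRS u hu => lt_of_le_of_lt hRS hu) ⟨0, hF.integrableOn⟩
  have hempty : ⋂ R : ℝ, {u : ℝ | R < |u|} = ∅ :=
    eq_empty_of_forall_notMem fun u hu => lt_irrefl |u| (mem_iInter.1 hu |u|)
  rwa [hempty, Measure.restrict_empty, integral_zero_measure] at h

lemma setIntegral_lt_abs_comp_mul {E : Type*} [NormedAddCommGroup E] [NormedSpace ℝ E]
    (F : ℝ → E) {x : ℝ} (hx : 0 < x) (δ : ℝ) :
    ∫ y in {y | δ < |y|}, x • F (x * y) = ∫ u in {u | x * δ < |u|}, F u := by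
  have hind : ({y | δ < |y|}.indicator fun y => x • F (x * y)) =
      fun y => x • {u | x * δ < |u|}.indicator F (x * y) := by
    funext y
    simp only [indicator, mem_ofPred_eq, abs_mul, abs_of_pos hx, mul_lt_mul_iff_right₀ hx]
    split_ifs <;> simp
  rw [← integral_indicator (measurableSet_lt measurable_const measurable_abs),
    ← integral_indicator (measurableSet_lt measurable_const measurable_abs), hind, integral_smul,
    Measure.integral_comp_mul_left, abs_inv, abs_of_pos hx, smul_smul, mul_inv_cancel₀ hx.ne',
    one_smul]

/-- For `k > ℓ ≥ 0` and every `δ > 0`: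
`lim_{x→∞} ∫_{|y|>δ} |R^{k,ℓ}(x,y)| dy = 0`. -/
theorem statement12 (k l : ℝ) (hl : 0 ≤ l) (hk : l < k) (δ : ℝ) (hδ : 0 < δ) :
    Tendsto (fun x : ℝ => ∫ y in {y : ℝ | δ < |y|}, ‖Rker k l x y‖)
      atTop (nhds 0) := by
  set A := 2 ^ l * |Real.Gamma (1 + k) * Real.exp 1 / (2 * Real.pi)|
  set F := rkerMajorant (1 + k - l)
  have hF : Integrable F := integrable_rkerMajorant (by linarith)
  refine squeeze_zero' (g := fun x => A * ∫ u in {u | x * δ < |u|}, F u)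
    (Eventually.of_forall fun x => integral_nonneg fun y => norm_nonneg _) ?_ ?_
  · filter_upwards [eventually_ge_atTop 1] with x hx
    have hx0 : 0 < x := by linarith
    calc ∫ y in {y | δ < |y|}, ‖Rker k l x y‖
        ≤ ∫ y in {y | δ < |y|}, A * (x • F (x * y)) :=
          integral_mono_of_nonneg (ae_of_all _ fun _ => norm_nonneg _)
            (((hF.comp_mul_left' hx0.ne').const_mul x).const_mul A).integrableOn
            (ae_of_all _ fun y => norm_Rker_le hl hk hx y)
      _ = A * ∫ u in {u | x * δ < |u|}, F u := by
          rw [integral_const_mul, setIntegral_lt_abs_comp_mul F hx0]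
  · simpa using ((tendsto_setIntegral_lt_abs hF).comp
      (tendsto_id.atTop_mul_const hδ)).const_mul A
end
end
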